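/- Let (A, ·) be a perm algebra, r ∈ A ⊗ A a solution of the perm Yang-Baxter equation whose skew-symmetric part is (R, ad)-invariant, and T_{r−σ(r)}: A* → A bijective (factorizable case). Define 𝔅(a, b) = −λ⟨T_{r−σ(r)}⁻¹(a), b⟩ for a fixed λ ≠ 0, and P(a) = Tᵣ(𝔅♯(a)). Then (A, ·, 𝔅, P) is a quadratic Rota-Baxter perm algebra of weight λ. -/

import Mathlib

/-!
Write `s = r - σ(r)` and `Φ = -λ T_s⁻¹`, so that `𝔅(a, b) = Φ a b` and `P = T_r ∘ Φ`.
As `s` is skew, so is `Φ`; the `(R, ad)`-invariance of `s` becomes `Φ (a·b) = Φ a ∘ ad b`,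
and together with skewness `Φ b ∘ L a = Φ (a·b)`.
Contracting `[[r,r]]` against `f ⊗ g ⊗ id` gives
`T_r f · T_r g = T_r (g ∘ L (T_r f) + f ∘ ad (T_{σ(r)} g))`. For `f = Φ a`, `g = Φ b` we have
`T_{σ(r)} g = P b + λ b`, and the two invariance identities turn the argument of `T_r` into
`Φ (P a · b + a · P b + λ a · b)`: the Rota-Baxter identity. The compatibility of `P` with `𝔅`
follows from `f (T_s g) = f (T_r g) - g (T_r f)`.
-/

open TensorProduct

section
variable {K : Type*} [Field K] {A : Type*} [AddCommGroup A] [Module K A]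

/-- perm identity for a plain binary operation -/
def IsPermFn {X : Type*} (mu : X → X → X) : Prop :=
  ∀ a b c : X, mu a (mu b c) = mu (mu a b) c ∧ mu (mu a b) c = mu (mu b a) c

/-- perm algebra: bundled bilinear multiplication satisfying the perm identities -/
def IsPermMul (m : A →ₗ[K] A →ₗ[K] A) : Prop :=
  ∀ a b c : A, m a (m b c) = m (m a b) c ∧ m (m a b) c = m (m b a) c

/-- The map `T_r : A* → A` associated with a 2-tensor `r ∈ A ⊗ A`,
`T_r(a*) = Σ ⟨a*, a_i⟩ b_i` for `r = Σ a_i ⊗ b_i`. -/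
noncomputable def Tten (r : A ⊗[K] A) : Module.Dual K A →ₗ[K] A :=
  TensorProduct.lift (LinearMap.mk₂ K
    (fun a b => (Module.Dual.eval K A a).smulRight b)
    (by intro a a' b; ext f; simp [add_smul])
    (by intro c a b; ext f; simp [mul_smul])
    (by intro a b b'; ext f; simp [smul_add])
    (by intro c a b; ext f; simp [smul_comm c])) r

noncomputable def mulT (m : A →ₗ[K] A →ₗ[K] A) : A ⊗[K] A →ₗ[K] A := TensorProduct.lift m

noncomputable def p13_23 (m : A →ₗ[K] A →ₗ[K] A) :
    (A ⊗[K] A) ⊗[K] (A ⊗[K] A) →ₗ[K] (A ⊗[K] A) ⊗[K] A :=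
  (TensorProduct.map LinearMap.id (mulT m)) ∘ₗ
    (TensorProduct.tensorTensorTensorComm K A A A A).toLinearMap

noncomputable def p12_13 (m : A →ₗ[K] A →ₗ[K] A) :
    (A ⊗[K] A) ⊗[K] (A ⊗[K] A) →ₗ[K] (A ⊗[K] A) ⊗[K] A :=
  (TensorProduct.assoc K A A A).symm.toLinearMap ∘ₗ
    (TensorProduct.map (mulT m) LinearMap.id) ∘ₗ
    (TensorProduct.tensorTensorTensorComm K A A A A).toLinearMap

noncomputable def p13_12 (m : A →ₗ[K] A →ₗ[K] A) :
    (A ⊗[K] A) ⊗[K] (A ⊗[K] A) →ₗ[K] (A ⊗[K] A) ⊗[K] A :=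
  (TensorProduct.assoc K A A A).symm.toLinearMap ∘ₗ
    (TensorProduct.map (mulT m) (TensorProduct.comm K A A).toLinearMap) ∘ₗ
    (TensorProduct.tensorTensorTensorComm K A A A A).toLinearMap

noncomputable def p12_23 (m : A →ₗ[K] A →ₗ[K] A) :
    (A ⊗[K] A) ⊗[K] (A ⊗[K] A) →ₗ[K] (A ⊗[K] A) ⊗[K] A :=
  (TensorProduct.assoc K A A A).symm.toLinearMap ∘ₗ
    (TensorProduct.leftComm K A A A).toLinearMap ∘ₗ
    (TensorProduct.map (mulT m) LinearMap.id) ∘ₗ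
    (TensorProduct.tensorTensorTensorComm K A A A A).toLinearMap ∘ₗ
    (TensorProduct.map (TensorProduct.comm K A A).toLinearMap LinearMap.id)

/-- `[[r,r]] = r₁₂·r₂₃ − r₁₃·r₂₃ + r₁₂·r₁₃ − r₁₃·r₁₂` -/
noncomputable def ybrac (m : A →ₗ[K] A →ₗ[K] A) (r : A ⊗[K] A) : (A ⊗[K] A) ⊗[K] A :=
  p12_23 m (r ⊗ₜ r) - p13_23 m (r ⊗ₜ r) + p12_13 m (r ⊗ₜ r) - p13_12 m (r ⊗ₜ r)

/-- the perm Yang-Baxter equation -/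
noncomputable def IsPYBESol (m : A →ₗ[K] A →ₗ[K] A) (r : A ⊗[K] A) : Prop := ybrac m r = 0

/-- `(id ⊗ R(a) − ad(a) ⊗ id)(s) = 0` for all `a`. -/
def RadInv (m : A →ₗ[K] A →ₗ[K] A) (s : A ⊗[K] A) : Prop :=
  ∀ a : A, TensorProduct.map LinearMap.id (m.flip a) s
    = TensorProduct.map (m a - m.flip a) LinearMap.id s

variable {V : Type*} [AddCommGroup V] [Module K V]

/-- representation of a perm algebra -/
def IsPermRep (m : A →ₗ[K] A →ₗ[K] A) (l rr : A →ₗ[K] V →ₗ[K] V) : Prop :=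
  ∀ a b : A, l (m a b) = l a ∘ₗ l b ∧ l a ∘ₗ l b = l b ∘ₗ l a ∧
    rr (m a b) = rr b ∘ₗ rr a ∧ rr b ∘ₗ rr a = rr b ∘ₗ l a ∧ rr b ∘ₗ l a = l a ∘ₗ rr b

/-- A-perm algebra -/
def IsAPermAlg (m : A →ₗ[K] A →ₗ[K] A) (l rr : A →ₗ[K] V →ₗ[K] V)
    (mV : V →ₗ[K] V →ₗ[K] V) : Prop :=
  IsPermRep m l rr ∧ IsPermMul mV ∧
  (∀ (a : A) (u w : V), rr a (mV u w) = rr a (mV w u) ∧ rr a (mV u w) = mV u (rr a w)) ∧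
  (∀ (a : A) (u w : V), mV (l a u) w = mV (rr a u) w ∧ mV (l a u) w = l a (mV u w) ∧
    l a (mV u w) = mV u (l a w))


/-- Rota-Baxter operator of weight `lam` on a perm algebra. -/
def IsRB (m : A →ₗ[K] A →ₗ[K] A) (lam : K) (P : A →ₗ[K] A) : Prop :=
  ∀ a b : A, m (P a) (P b) = P (m (P a) b + m a (P b) + lam • m a b)

/-- quadratic Rota-Baxter perm algebra of weight `lam` -/
def IsQuadRB (m : A →ₗ[K] A →ₗ[K] A) (B : A →ₗ[K] A →ₗ[K] K)
    (P : A →ₗ[K] A) (lam : K) : Prop :=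
  IsPermMul m ∧ Function.Bijective B ∧ (∀ a b : A, B a b = - B b a) ∧
  (∀ a b c : A, B (m a b) c = B a (m b c - m c b)) ∧ IsRB m lam P ∧
  ∀ a b : A, B (P a) b + B a (P b) + lam * B a b = 0

@[simp] lemma Tten_tmul (a b : A) (f : Module.Dual K A) : Tten (a ⊗ₜ[K] b) f = f a • b := by
  simp [Tten]

@[simp] lemma Tten_zero : Tten (0 : A ⊗[K] A) = 0 := by
  simp [Tten]

@[simp] lemma Tten_add (s t : A ⊗[K] A) : Tten (s + t) = Tten s + Tten t := by
  simp [Tten]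

@[simp] lemma Tten_sub (s t : A ⊗[K] A) : Tten (s - t) = Tten s - Tten t := by
  simp [Tten]

lemma Tten_map (φ ψ : A →ₗ[K] A) (s : A ⊗[K] A) (f : Module.Dual K A) :
    Tten (TensorProduct.map φ ψ s) f = ψ (Tten s (f ∘ₗ φ)) := by
  induction s using TensorProduct.induction_on with
  | zero => simp
  | tmul a b => simp
  | add s t hs ht => simp [hs, ht]

lemma apply_Tten_comm (s : A ⊗[K] A) (f g : Module.Dual K A) :
    f (Tten (TensorProduct.comm K A A s) g) = g (Tten s f) := by
  induction s using TensorProduct.induction_on with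
  | zero => simp
  | tmul a b => simp [mul_comm]
  | add s t hs ht => simp [hs, ht]

lemma apply_Tten_sub_comm (r : A ⊗[K] A) (f g : Module.Dual K A) :
    f (Tten (r - TensorProduct.comm K A A r) g) = f (Tten r g) - g (Tten r f) := by
  simp [apply_Tten_comm]

noncomputable def contract12 (f g : Module.Dual K A) : (A ⊗[K] A) ⊗[K] A →ₗ[K] A :=
  TensorProduct.lid K A ∘ₗ
    TensorProduct.map (LinearMap.mul' K K ∘ₗ TensorProduct.map f g) LinearMap.id

@[simp] lemma contract12_tmul (f g : Module.Dual K A) (x y z : A) :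
    contract12 f g ((x ⊗ₜ[K] y) ⊗ₜ[K] z) = (f x * g y) • z := by
  simp [contract12]

section Contractions

variable (m : A →ₗ[K] A →ₗ[K] A) (f g : Module.Dual K A) (s t : A ⊗[K] A)

lemma contract12_p13_23 : contract12 f g (p13_23 m (s ⊗ₜ t)) = m (Tten s f) (Tten t g) := by
  induction s using TensorProduct.induction_on with
  | zero => simp [p13_23]
  | add x y hx hy => simp only [add_tmul, map_add, hx, hy, Tten_add, LinearMap.add_apply]
  | tmul a b =>
    induction t using TensorProduct.induction_on with
    | zero => simp [p13_23]
    | add x y hx hy => simp only [tmul_add, map_add, hx, hy, Tten_add, LinearMap.add_apply]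
    | tmul c d => simp [p13_23, mulT, mul_smul, smul_comm (g c) (f a)]

lemma contract12_p12_23 :
    contract12 f g (p12_23 m (s ⊗ₜ t)) = Tten t (g ∘ₗ m (Tten s f)) := by
  induction s using TensorProduct.induction_on with
  | zero => simp [p12_23]
  | add x y hx hy =>
    simp only [add_tmul, map_add, hx, hy, Tten_add, LinearMap.add_apply, LinearMap.comp_add]
  | tmul a b =>
    induction t using TensorProduct.induction_on with
    | zero => simp [p12_23]
    | add x y hx hy => simp only [tmul_add, map_add, hx, hy, Tten_add, LinearMap.add_apply]
    | tmul c d => simp [p12_23, mulT, mul_smul, mul_comm (f a)]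

lemma contract12_p12_13 :
    contract12 f g (p12_13 m (s ⊗ₜ t)) = Tten t (f ∘ₗ m (Tten (TensorProduct.comm K A A s) g)) := by
  induction s using TensorProduct.induction_on with
  | zero => simp [p12_13]
  | add x y hx hy =>
    simp only [add_tmul, map_add, hx, hy, Tten_add, LinearMap.add_apply, LinearMap.comp_add]
  | tmul a b =>
    induction t using TensorProduct.induction_on with
    | zero => simp [p12_13]
    | add x y hx hy => simp only [tmul_add, map_add, hx, hy, Tten_add, LinearMap.add_apply]
    | tmul c d => simp [p12_13, mulT, mul_smul, mul_comm (g b)]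

lemma contract12_p13_12 :
    contract12 f g (p13_12 m (s ⊗ₜ t)) =
      Tten s (f ∘ₗ m.flip (Tten (TensorProduct.comm K A A t) g)) := by
  induction t using TensorProduct.induction_on with
  | zero => simp [p13_12]
  | add x y hx hy =>
    simp only [tmul_add, map_add, hx, hy, Tten_add, LinearMap.add_apply, LinearMap.comp_add]
  | tmul c d =>
    induction s using TensorProduct.induction_on with
    | zero => simp [p13_12]
    | add x y hx hy => simp only [add_tmul, map_add, hx, hy, Tten_add, LinearMap.add_apply]
    | tmul a b => simp [p13_12, mulT, mul_smul, mul_comm (g d)]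

end Contractions

lemma IsPYBESol.mul_Tten_Tten {m : A →ₗ[K] A →ₗ[K] A} {r : A ⊗[K] A} (hr : IsPYBESol m r)
    (f g : Module.Dual K A) :
    m (Tten r f) (Tten r g) =
      Tten r (g ∘ₗ m (Tten r f) +
        f ∘ₗ (m (Tten (TensorProduct.comm K A A r) g) -
          m.flip (Tten (TensorProduct.comm K A A r) g))) := by
  have h := congrArg (contract12 f g) hr
  simp only [ybrac, map_sub, map_add, map_zero, contract12_p12_23, contract12_p13_23,
    contract12_p12_13, contract12_p13_12] at h
  rw [LinearMap.comp_sub, map_add, map_sub, eq_comm, ← sub_eq_zero, ← h]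
  abel

lemma RadInv.mul_Tten {m : A →ₗ[K] A →ₗ[K] A} {s : A ⊗[K] A} (hs : RadInv m s)
    (a : A) (f : Module.Dual K A) :
    m (Tten s f) a = Tten s (f ∘ₗ (m a - m.flip a)) := by
  simpa [Tten_map] using congrArg (Tten · f) (hs a)

section InverseOfTten

variable {Tinv : A →ₗ[K] Module.Dual K A}

lemma skew_of_rightInverse_Tten_sub_comm {r : A ⊗[K] A}
    (h : Function.RightInverse Tinv (Tten (r - TensorProduct.comm K A A r))) (x y : A) :
    Tinv x y = -Tinv y x := by
  calc Tinv x y = Tinv x (Tten (r - TensorProduct.comm K A A r) (Tinv y)) := by rw [h]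
    _ = -Tinv y (Tten (r - TensorProduct.comm K A A r) (Tinv x)) := by
      rw [apply_Tten_sub_comm, apply_Tten_sub_comm]; ring
    _ = -Tinv y x := by rw [h]

lemma RadInv.apply_mul_of_inverse {m : A →ₗ[K] A →ₗ[K] A} {s : A ⊗[K] A} (hs : RadInv m s)
    (h1 : Function.RightInverse Tinv (Tten s)) (h2 : Function.LeftInverse Tinv (Tten s))
    (x y : A) : Tinv (m x y) = Tinv x ∘ₗ (m y - m.flip y) := by
  conv_lhs => rw [← h1 x]
  rw [hs.mul_Tten, h2]

end InverseOfTten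

section SkewInvariantForm

variable {m : A →ₗ[K] A →ₗ[K] A} {Φ : A →ₗ[K] Module.Dual K A}
  (hskew : ∀ x y, Φ x y = -Φ y x) (hinv : ∀ x y, Φ (m x y) = Φ x ∘ₗ (m y - m.flip y))
include hskew hinv

lemma comp_mul_eq_of_skew_of_invariant (x y : A) : Φ y ∘ₗ m x = Φ (m x y) := by
  ext c
  rw [LinearMap.comp_apply, hskew y, hinv, hinv]
  simp only [LinearMap.comp_apply, LinearMap.sub_apply, LinearMap.flip_apply, map_sub]
  ring

lemma isRB_Tten_comp {r : A ⊗[K] A} (hr : IsPYBESol m r) {lam : K}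
    (hT : ∀ b, Tten (r - TensorProduct.comm K A A r) (Φ b) = (-lam) • b) :
    IsRB m lam (Tten r ∘ₗ Φ) := by
  intro a b
  have hσ : Tten (TensorProduct.comm K A A r) (Φ b) = Tten r (Φ b) + lam • b := by
    rw [← sub_sub_cancel (Tten r (Φ b)) (Tten (TensorProduct.comm K A A r) (Φ b)),
      ← LinearMap.sub_apply, ← Tten_sub, hT, neg_smul, sub_neg_eq_add]
  rw [LinearMap.comp_apply, LinearMap.comp_apply, hr.mul_Tten_Tten, hσ, ← hinv,
    comp_mul_eq_of_skew_of_invariant hskew hinv, ← map_add, map_add (m a), map_smul, add_assoc]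
  rfl

end SkewInvariantForm

lemma apply_Tten_comp_add_apply_Tten_comp_add_mul_eq_zero {Φ : A →ₗ[K] Module.Dual K A}
    {r : A ⊗[K] A} {lam : K} (hskew : ∀ x y, Φ x y = -Φ y x)
    (hT : ∀ b, Tten (r - TensorProduct.comm K A A r) (Φ b) = (-lam) • b) (a b : A) :
    Φ ((Tten r ∘ₗ Φ) a) b + Φ a ((Tten r ∘ₗ Φ) b) + lam * Φ a b = 0 := by
  have h : lam * Φ a b = -Φ a (Tten (r - TensorProduct.comm K A A r) (Φ b)) := by
    rw [hT, map_smul, smul_eq_mul]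
    ring
  rw [h, apply_Tten_sub_comm, LinearMap.comp_apply, LinearMap.comp_apply, hskew (Tten r (Φ a))]
  ring

theorem stmt17_general (m : A →ₗ[K] A →ₗ[K] A) (hm : IsPermMul m)
    (r : A ⊗[K] A) (hr : IsPYBESol m r)
    (hinv : RadInv m (r - (TensorProduct.comm K A A) r))
    (Tinv : A →ₗ[K] Module.Dual K A)
    (h1 : ∀ a : A, Tten (r - (TensorProduct.comm K A A) r) (Tinv a) = a)
    (h2 : ∀ f : Module.Dual K A, Tinv (Tten (r - (TensorProduct.comm K A A) r) f) = f)
    (lam : K) (hlam : lam ≠ 0) :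
    IsQuadRB m ((-lam) • Tinv) (Tten r ∘ₗ ((-lam) • Tinv)) lam := by
  have hskew : ∀ x y, ((-lam) • Tinv) x y = -((-lam) • Tinv) y x := fun x y => by
    simp [skew_of_rightInverse_Tten_sub_comm h1 x y]
  have hinvar : ∀ x y, ((-lam) • Tinv) (m x y) = ((-lam) • Tinv) x ∘ₗ (m y - m.flip y) :=
    fun x y => by simp [hinv.apply_mul_of_inverse h1 h2, LinearMap.smul_comp]
  have hT : ∀ b, Tten (r - TensorProduct.comm K A A r) (((-lam) • Tinv) b) = (-lam) • b :=
    fun b => by simp only [LinearMap.smul_apply, map_smul, h1]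
  have hbij : Function.Bijective ((-lam) • Tinv) :=
    (LinearEquiv.smulOfNeZero K _ (-lam) (neg_ne_zero.mpr hlam)).bijective.comp
      (Function.bijective_iff_has_inverse.mpr ⟨_, h1, h2⟩)
  exact ⟨hm, hbij, hskew, fun a b c => by rw [hinvar]; rfl, isRB_Tten_comp hskew hinvar hr hT,
    apply_Tten_comp_add_apply_Tten_comp_add_mul_eq_zero hskew hT⟩

theorem stmt17 [FiniteDimensional K A] (m : A →ₗ[K] A →ₗ[K] A) (hm : IsPermMul m)
    (r : A ⊗[K] A) (hr : IsPYBESol m r)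
    (hinv : RadInv m (r - (TensorProduct.comm K A A) r))
    (Tinv : A →ₗ[K] Module.Dual K A)
    (h1 : ∀ a : A, Tten (r - (TensorProduct.comm K A A) r) (Tinv a) = a)
    (h2 : ∀ f : Module.Dual K A, Tinv (Tten (r - (TensorProduct.comm K A A) r) f) = f)
    (lam : K) (hlam : lam ≠ 0) :
    IsQuadRB m ((-lam) • Tinv) (Tten r ∘ₗ ((-lam) • Tinv)) lam :=
  stmt17_general m hm r hr hinv Tinv h1 h2 lam hlam

end
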